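/- Let ν be a measure on ℝ and let p : ℕ → ℝ → ℝ be a sequence of measurable functions, each square-integrable with respect to ν, satisfying the orthonormality relations ∫_ℝ p k (t) · p l (t) dν(t) = 1 if k = l and 0 otherwise. Let n ≥ 1 and let A_n denote the alternating group of even permutations of Fin n. For m : Fin n → ℕ define the W_e-symmetric polynomial p^sym_m(x) = ∑_{σ ∈ A_n} ∏_i p (m (σ⁻¹ i)) (x i) for x : Fin n → ℝ. Then for all m, m' : Fin n → ℕ, ∫_{x : Fin n → ℝ} p^sym_m(x) · p^sym_{m'}(x) d(ν^{⊗n})(x) = card {(σ, τ) ∈ A_n × A_n : m ∘ σ = m' ∘ τ}, where ν^{⊗n} is the n-fold product measure. In particular, for m ≠ m' with no pair of even permutations matching them the integral vanishes, so the functions p^sym_m form an orthogonal family. -/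

import Mathlib

/-!
Multiplying out `psym n p m * psym n p m'` gives a sum over pairs `(σ, τ)` of even permutations.
By Fubini each summand integrates to a product of one-dimensional integrals, which by
orthonormality is `1` if the index vectors `m ∘ σ⁻¹` and `m' ∘ τ⁻¹` agree and `0` otherwise;
inverting both permutations turns the number of such pairs into the stated count.
-/

open MeasureTheory

/-- `W_e`-symmetrization of a product of one-variable functions:
`p^sym_m(x) = ∑_{σ ∈ Aₙ} ∏ᵢ p (m (σ⁻¹ i)) (x i)`. -/
noncomputable def psym (n : ℕ) (p : ℕ → ℝ → ℝ) (m : Fin n → ℕ) (x : Fin n → ℝ) : ℝ :=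
  ∑ σ : alternatingGroup (Fin n), ∏ i, p (m ((σ : Equiv.Perm (Fin n))⁻¹ i)) (x i)

open Equiv

section Orthonormal

variable {α ι κ : Type*} [MeasurableSpace α] [Fintype ι] [DecidableEq κ]
  {ν : Measure α} [SigmaFinite ν] {p : κ → α → ℝ}

theorem integral_pi_prod_mul_of_orthonormal
    (horth : ∀ k l, ∫ t, p k t * p l t ∂ν = if k = l then 1 else 0) (a b : ι → κ) :
    ∫ x : ι → α, ∏ i, p (a i) (x i) * p (b i) (x i) ∂(Measure.pi fun _ => ν) =
      if a = b then 1 else 0 := by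
  rw [integral_fintype_prod_eq_prod (fun i t => p (a i) t * p (b i) t)]
  simp_rw [horth, Finset.prod_boole, Finset.mem_univ, true_implies, funext_iff]

theorem integral_sum_perm_mul_sum_perm_of_orthonormal
    (hL2 : ∀ k, MemLp (p k) 2 ν)
    (horth : ∀ k l, ∫ t, p k t * p l t ∂ν = if k = l then 1 else 0)
    (G : Subgroup (Perm ι)) [Fintype G] (m m' : ι → κ) :
    ∫ x : ι → α, (∑ σ : G, ∏ i, p (m ((σ : Perm ι)⁻¹ i)) (x i)) *
        (∑ τ : G, ∏ i, p (m' ((τ : Perm ι)⁻¹ i)) (x i)) ∂(Measure.pi fun _ => ν) =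
      ({q : G × G | m ∘ (q.1 : Perm ι) = m' ∘ (q.2 : Perm ι)}.ncard : ℝ) := by
  have hint (a b : ι → κ) : Integrable (fun x : ι → α => ∏ i, p (a i) (x i) * p (b i) (x i))
      (Measure.pi fun _ => ν) :=
    Integrable.fintype_prod fun i => (hL2 (a i)).integrable_mul (hL2 (b i))
  simp_rw [Fintype.sum_mul_sum, ← Finset.prod_mul_distrib, ← Fintype.sum_prod_type']
  rw [integral_finsetSum _ fun q _ => hint _ _]
  simp_rw [integral_pi_prod_mul_of_orthonormal horth, Finset.sum_boole]
  rw [← Set.ncard_inv, ← Set.ncard_coe_finset]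
  congr
  ext q
  simp [Function.comp_def]

end Orthonormal

theorem psym_orthogonality (ν : Measure ℝ) [SigmaFinite ν] (p : ℕ → ℝ → ℝ)
    (hL2 : ∀ k, MemLp (p k) 2 ν)
    (horth : ∀ k l, ∫ t, p k t * p l t ∂ν = if k = l then 1 else 0)
    (n : ℕ) (m m' : Fin n → ℕ) :
    ∫ x : Fin n → ℝ, psym n p m x * psym n p m' x ∂(Measure.pi fun _ : Fin n => ν) =
      ({q : alternatingGroup (Fin n) × alternatingGroup (Fin n) |
        m ∘ (q.1 : Equiv.Perm (Fin n)) = m' ∘ (q.2 : Equiv.Perm (Fin n))}.ncard : ℝ) :=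
  integral_sum_perm_mul_sum_perm_of_orthonormal hL2 horth (alternatingGroup (Fin n)) m m'
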